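/- arXiv:math/9808007 — 3 statements merged into one kernel-verified Lean document; each statement's English description precedes it below -/
import Mathlib

section
/- Let S = [[0,-1],[1,0]], T = [[1,1],[0,1]] and V = T^2 = [[1,2],[0,1]] in SL(2,ℤ), and let Γ_u be the subgroup of SL(2,ℤ) generated by -I, V^2, VS and SV. Let X = [[2,1],[0,1]] ∈ GL(2,ℚ). Then Γ_u has index 6 in SL(2,ℤ), and conjugation by X carries Γ_u onto the principal congruence subgroup of level 2: the set {X^{-1} A X : A ∈ Γ_u} ⊂ GL(2,ℚ) equals the image in GL(2,ℚ) of Γ(2) = {A ∈ SL(2,ℤ) : A ≡ I mod 2}. -/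
open scoped MatrixGroups

/-- `S = [[0,-1],[1,0]]` in `SL(2,ℤ)`. -/
def Smat : SL(2, ℤ) := ⟨!![0, -1; 1, 0], by norm_num [Matrix.det_fin_two_of]⟩

/-- `T = [[1,1],[0,1]]` in `SL(2,ℤ)`. -/
def Tmat : SL(2, ℤ) := ⟨!![1, 1; 0, 1], by norm_num [Matrix.det_fin_two_of]⟩

/-- `V = T² = [[1,2],[0,1]]` in `SL(2,ℤ)`. -/
def Vmat : SL(2, ℤ) := ⟨!![1, 2; 0, 1], by norm_num [Matrix.det_fin_two_of]⟩

/-- `-I` in `SL(2,ℤ)`. -/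
def negI : SL(2, ℤ) := ⟨!![-1, 0; 0, -1], by norm_num [Matrix.det_fin_two_of]⟩

/-- `Γ_u = ±⟨V², VS, SV⟩ ≤ SL(2,ℤ)`. -/
def GammaU : Subgroup SL(2, ℤ) :=
  Subgroup.closure {negI, Vmat ^ 2, Vmat * Smat, Smat * Vmat}

/-- `X = [[2,1],[0,1]]` as a rational matrix. -/
def Xmat : Matrix (Fin 2) (Fin 2) ℚ := !![2, 1; 0, 1]


/-!
Reduction mod 4 shows that `Γ_u` lies in the stabilizer of the line `±(1, 1)` in `(ℤ/4)²`, so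
that `a + b ≡ c + d (mod 4)` for every `[[a, b], [c, d]] ∈ Γ_u`. Any such matrix is conjugated by
`X` to `[[a - c, (a + b - c - d)/2], [2c, c + d]] ∈ Γ(2)`. Conversely, the Euclidean algorithm
shows `Γ(2) = ⟨-I, V, [[1, 0], [2, 1]]⟩`, and these generators are the conjugates of
`-I, V², VS ∈ Γ_u`. Hence `X⁻¹ Γ_u X = Γ(2)`, and `Γ_u` is the whole stabilizer of the line, whose
index is the size of its orbit: the 6 points of `ℙ¹(ℤ/4)`.
-/

open CongruenceSubgroup Matrix.SpecialLinearGroup MulAction Pointwise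

def Bmat : SL(2, ℤ) := ⟨!![1, 0; 2, 1], by norm_num [Matrix.det_fin_two_of]⟩

lemma det_fin_two_coe_eq_one (A : SL(2, ℤ)) : A 0 0 * A 1 1 - A 0 1 * A 1 0 = 1 := by
  rw [← Matrix.det_fin_two]; exact A.det_coe

lemma mem_Gamma_two_iff {A : SL(2, ℤ)} :
    A ∈ Gamma 2 ↔ Odd (A 0 0) ∧ Even (A 0 1) ∧ Even (A 1 0) ∧ Odd (A 1 1) := by
  simp only [Gamma_mem, ZMod.intCast_eq_one_iff_odd, ZMod.intCast_eq_zero_iff_even]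

lemma exists_abs_add_two_mul_le (a c : ℤ) (hc : c ≠ 0) : ∃ q : ℤ, |a + 2 * q * c| ≤ |c| := by
  set x : ℚ := a / (2 * c)
  refine ⟨-round x, ?_⟩
  have key : ((a + 2 * -round x * c : ℤ) : ℚ) = 2 * c * (x - round x) := by
    rw [mul_sub, show 2 * (c : ℚ) * x = a by simp only [x]; field_simp]
    push_cast; ring
  have : |((a + 2 * -round x * c : ℤ) : ℚ)| ≤ |(c : ℚ)| := by
    rw [key, abs_mul, abs_mul, abs_two]
    nlinarith [abs_sub_round x, abs_nonneg (c : ℚ)]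
  exact_mod_cast this

lemma exists_abs_add_two_mul_lt {a c : ℤ} (hc : c ≠ 0) (hac : Odd (a - c)) :
    ∃ q : ℤ, |a + 2 * q * c| < |c| := by
  obtain ⟨q, hq⟩ := exists_abs_add_two_mul_le a c hc
  refine ⟨q, lt_of_le_of_ne hq fun h => ?_⟩
  rcases abs_eq_abs.mp h with h | h
  · exact Int.not_even_iff_odd.mpr hac ⟨-(q * c), by linear_combination h⟩
  · exact Int.not_even_iff_odd.mpr hac ⟨-(q * c) - c, by linear_combination h⟩

lemma coe_Vmat_zpow (k : ℤ) :
    ((Vmat ^ k : SL(2, ℤ)) : Matrix (Fin 2) (Fin 2) ℤ) = !![1, 2 * k; 0, 1] := by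
  have : Vmat = ModularGroup.T ^ (2 : ℤ) := by ext i j; fin_cases i <;> fin_cases j <;> rfl
  rw [this, ← zpow_mul, ModularGroup.coe_T_zpow]

lemma coe_Bmat_zpow (k : ℤ) :
    ((Bmat ^ k : SL(2, ℤ)) : Matrix (Fin 2) (Fin 2) ℤ) = !![1, 0; 2 * k, 1] := by
  have hB : (Bmat : Matrix (Fin 2) (Fin 2) ℤ) = !![1, 0; 2, 1] := rfl
  induction k using Int.induction_on with
  | zero => simp [Matrix.one_fin_two]
  | succ n ih =>
    rw [zpow_add_one, coe_mul, ih, hB, Matrix.mul_fin_two]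
    ring_nf
  | pred n ih =>
    rw [zpow_sub_one, coe_mul, ih, coe_inv, hB, Matrix.adjugate_fin_two_of, Matrix.mul_fin_two]
    ring_nf

lemma Vmat_zpow_mul_apply (k : ℤ) (M : SL(2, ℤ)) :
    (Vmat ^ k * M) 0 0 = M 0 0 + 2 * k * M 1 0 ∧ (Vmat ^ k * M) 1 0 = M 1 0 := by
  constructor <;> simp [coe_Vmat_zpow, Matrix.mul_apply]

lemma Bmat_zpow_mul_apply (k : ℤ) (M : SL(2, ℤ)) :
    (Bmat ^ k * M) 0 0 = M 0 0 ∧ (Bmat ^ k * M) 1 0 = M 1 0 + 2 * k * M 0 0 := by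
  constructor <;> simp [coe_Bmat_zpow, Matrix.mul_apply, add_comm]

lemma negI_mem_Gamma_two : negI ∈ Gamma 2 := by
  rw [mem_Gamma_two_iff]; decide

lemma Vmat_mem_Gamma_two : Vmat ∈ Gamma 2 := by
  rw [mem_Gamma_two_iff]; decide

lemma Bmat_mem_Gamma_two : Bmat ∈ Gamma 2 := by
  rw [mem_Gamma_two_iff]; decide

lemma exists_eq_negI_pow_mul_Vmat_zpow {M : SL(2, ℤ)} (hM : M ∈ Gamma 2) (hc : M 1 0 = 0) :
    ∃ (n : ℕ) (k : ℤ), M = negI ^ n * Vmat ^ k := by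
  obtain ⟨-, ⟨k, hk⟩, -, -⟩ := mem_Gamma_two_iff.mp hM
  have had : M 0 0 * M 1 1 = 1 := by simpa [hc] using det_fin_two_coe_eq_one M
  have hM : (M : Matrix (Fin 2) (Fin 2) ℤ) = !![M 0 0, k + k; 0, M 1 1] := by
    rw [← hk, ← hc]; exact Matrix.eta_fin_two _
  rcases Int.mul_eq_one_iff_eq_one_or_neg_one.mp had with ⟨ha, hd⟩ | ⟨ha, hd⟩
  · refine ⟨0, k, Subtype.ext ?_⟩
    rw [pow_zero, one_mul, coe_Vmat_zpow, hM, ha, hd]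
    ring_nf
  · refine ⟨1, -k, Subtype.ext ?_⟩
    rw [pow_one, coe_mul, coe_Vmat_zpow, hM, ha, hd,
      show (negI : Matrix (Fin 2) (Fin 2) ℤ) = !![-1, 0; 0, -1] from rfl, Matrix.mul_fin_two]
    ring_nf

-- one round of the Euclidean algorithm on the first column, with steps `2c` and then `2a`
lemma exists_abs_zpow_mul_zpow_mul_apply_lt {M : SL(2, ℤ)} (hM : M ∈ Gamma 2) (hc : M 1 0 ≠ 0) :
    ∃ q r : ℤ, |(Bmat ^ r * (Vmat ^ q * M)) 1 0| < |M 1 0| := by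
  obtain ⟨ha, -, hc2, -⟩ := mem_Gamma_two_iff.mp hM
  obtain ⟨q, hq⟩ := exists_abs_add_two_mul_lt hc (ha.sub_even hc2)
  have hM₁ : Vmat ^ q * M ∈ Gamma 2 := mul_mem (zpow_mem Vmat_mem_Gamma_two q) hM
  obtain ⟨ha₁, hc₁⟩ := Vmat_zpow_mul_apply q M
  obtain ⟨ha₁odd, -, -, -⟩ := mem_Gamma_two_iff.mp hM₁
  have ha₁0 : (Vmat ^ q * M) 0 0 ≠ 0 := fun h => Int.not_odd_zero (h ▸ ha₁odd)
  obtain ⟨r, hr⟩ := exists_abs_add_two_mul_lt ha₁0 (hc₁ ▸ hc2.sub_odd ha₁odd)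
  refine ⟨q, r, ?_⟩
  rw [(Bmat_zpow_mul_apply r _).2]
  exact hr.trans (by rwa [ha₁])

theorem Gamma_two_eq_closure : Gamma 2 = Subgroup.closure {negI, Vmat, Bmat} := by
  set H := Subgroup.closure {negI, Vmat, Bmat}
  have hV : Vmat ∈ H := Subgroup.subset_closure (by simp)
  have hB : Bmat ∈ H := Subgroup.subset_closure (by simp)
  refine le_antisymm (fun M hM => ?_) ?_
  · induction hn : (M 1 0).natAbs using Nat.strong_induction_on generalizing M with
    | _ n ih =>
    by_cases hc : M 1 0 = 0
    · obtain ⟨m, k, rfl⟩ := exists_eq_negI_pow_mul_Vmat_zpow hM hc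
      exact mul_mem (pow_mem (Subgroup.subset_closure (by simp)) m) (zpow_mem hV k)
    obtain ⟨q, r, hlt⟩ := exists_abs_zpow_mul_zpow_mul_apply_lt hM hc
    have hM' : Bmat ^ r * (Vmat ^ q * M) ∈ Gamma 2 :=
      mul_mem (zpow_mem Bmat_mem_Gamma_two r) (mul_mem (zpow_mem Vmat_mem_Gamma_two q) hM)
    have hlt' : ((Bmat ^ r * (Vmat ^ q * M)) 1 0).natAbs < n := by
      rw [← hn, ← Int.ofNat_lt, Int.natCast_natAbs, Int.natCast_natAbs]
      exact hlt
    have hMeq : M = Vmat ^ (-q) * (Bmat ^ (-r) * (Bmat ^ r * (Vmat ^ q * M))) := by group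
    rw [hMeq]
    exact mul_mem (zpow_mem hV _) (mul_mem (zpow_mem hB _) (ih _ hlt' _ hM' rfl))
  · rw [Subgroup.closure_le]
    rintro _ (rfl | rfl | rfl)
    exacts [negI_mem_Gamma_two, Vmat_mem_Gamma_two, Bmat_mem_Gamma_two]

def Xgl : GL (Fin 2) ℚ :=
  Matrix.GeneralLinearGroup.mkOfDetNeZero Xmat (by norm_num [Xmat, Matrix.det_fin_two_of])

def conjX : SL(2, ℤ) →* GL (Fin 2) ℚ := (MulAut.conj Xgl⁻¹).toMonoidHom.comp (mapGL ℚ)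

lemma coe_conjX (A : SL(2, ℤ)) :
    (conjX A : Matrix (Fin 2) (Fin 2) ℚ) =
      Xmat⁻¹ * (A : Matrix (Fin 2) (Fin 2) ℤ).map (Int.cast : ℤ → ℚ) * Xmat := by
  simp [conjX, Xgl, Matrix.coe_units_inv, Matrix.GeneralLinearGroup.mkOfDetNeZero]

lemma conjX_injective : Function.Injective conjX :=
  (MulAut.conj _).injective.comp mapGL_injective

-- the four entries of `A X = X C`
lemma conjX_eq_mapGL_iff (A C : SL(2, ℤ)) :
    conjX A = mapGL ℚ C ↔ 2 * A 0 0 = 2 * C 0 0 + C 1 0 ∧ A 0 0 + A 0 1 = 2 * C 0 1 + C 1 1 ∧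
      2 * A 1 0 = C 1 0 ∧ A 1 0 + A 1 1 = C 1 1 := by
  rw [conjX, MonoidHom.comp_apply, MulEquiv.coe_toMonoidHom, MulAut.conj_apply, inv_inv,
    mul_assoc, inv_mul_eq_iff_eq_mul, Units.ext_iff, Units.val_mul, Units.val_mul,
    ← Matrix.ext_iff]
  simp only [mapGL_coe_matrix, algebraMap_int_eq, map_apply_coe, RingHom.mapMatrix_apply,
    Int.coe_castRingHom, Xgl, Matrix.GeneralLinearGroup.mkOfDetNeZero, Xmat,
    Matrix.GeneralLinearGroup.val_mk', Matrix.mul_apply, Matrix.map_apply, Matrix.of_apply,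
    Matrix.cons_val', Matrix.cons_val_fin_one, Fin.sum_univ_two, Matrix.cons_val_zero,
    Matrix.cons_val_one, Fin.forall_fin_two, mul_zero, add_zero, mul_one, one_mul, zero_mul,
    zero_add]
  norm_cast
  omega

lemma exists_mem_Gamma_two_conjX_eq {A : SL(2, ℤ)}
    (hA : (4 : ℤ) ∣ A 0 0 + A 0 1 - A 1 0 - A 1 1) : ∃ C ∈ Gamma 2, conjX A = mapGL ℚ C := by
  obtain ⟨k, hk⟩ := hA
  have hdet := det_fin_two_coe_eq_one A
  have hCdet : (!![A 0 0 - A 1 0, 2 * k; 2 * A 1 0, A 1 0 + A 1 1]).det = 1 := by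
    rw [Matrix.det_fin_two_of]; linear_combination hdet + A 1 0 * hk
  refine ⟨⟨_, hCdet⟩, ?_, (conjX_eq_mapGL_iff _ _).mpr ?_⟩
  · have hodd : Odd ((A 0 0 - A 1 0) * (A 1 0 + A 1 1)) :=
      ⟨2 * k * A 1 0, by linear_combination hdet + A 1 0 * hk⟩
    obtain ⟨h₀₀, h₁₁⟩ := Int.odd_mul.mp hodd
    exact mem_Gamma_two_iff.mpr ⟨by simpa using h₀₀, by simp, by simp, by simpa using h₁₁⟩
  · simp only [Matrix.of_apply, Matrix.cons_val', Matrix.cons_val_zero, Matrix.cons_val_fin_one,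
      Matrix.cons_val_one, and_self, and_true]
    omega

instance : DistribMulAction SL(2, ℤ) (Fin 2 → ZMod 4) :=
  DistribMulAction.compHom _ (Matrix.SpecialLinearGroup.map (Int.castRingHom (ZMod 4)))

def diagVec : Fin 2 → ZMod 4 := ![1, 1]

def diagLine : Finset (Fin 2 → ZMod 4) := {diagVec, -diagVec}

lemma smul_diagVec (g : SL(2, ℤ)) :
    g • diagVec = ![((g 0 0 + g 0 1 : ℤ) : ZMod 4), ((g 1 0 + g 1 1 : ℤ) : ZMod 4)] := by
  change (map (Int.castRingHom (ZMod 4)) g : Matrix (Fin 2) (Fin 2) (ZMod 4)).mulVec diagVec = _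
  ext i; fin_cases i <;> simp [diagVec, Matrix.mulVec, dotProduct]

lemma smul_diagLine (g : SL(2, ℤ)) : g • diagLine = {g • diagVec, -(g • diagVec)} := by
  rw [diagLine, Finset.smul_finset_insert, Finset.smul_finset_singleton, smul_neg]

lemma mem_stabilizer_diagLine_of_smul_diagVec {g : SL(2, ℤ)}
    (h : g • diagVec = diagVec ∨ g • diagVec = -diagVec) : g ∈ stabilizer SL(2, ℤ) diagLine := by
  rw [mem_stabilizer_iff, smul_diagLine]
  rcases h with h | h <;> rw [h]
  · rfl
  · rw [neg_neg, Finset.pair_comm]; rfl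

lemma dvd_of_mem_stabilizer_diagLine {g : SL(2, ℤ)} (hg : g ∈ stabilizer SL(2, ℤ) diagLine) :
    (4 : ℤ) ∣ g 0 0 + g 0 1 - g 1 0 - g 1 1 := by
  have hmem : g • diagVec ∈ diagLine := by
    rw [← mem_stabilizer_iff.mp hg]
    exact Finset.smul_mem_smul_finset (by simp [diagLine])
  have h01 : (g • diagVec) 1 = (g • diagVec) 0 := by
    simp only [diagLine, Finset.mem_insert, Finset.mem_singleton] at hmem
    rcases hmem with h | h <;> rw [h] <;> rfl
  simp only [smul_diagVec, Matrix.cons_val_one, Matrix.cons_val_zero] at h01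
  simpa [sub_sub, ← sub_add] using (ZMod.intCast_eq_intCast_iff_dvd_sub _ _ 4).mp h01

lemma vec_mem_orbit_diagVec {e : ℤ} (he : e * e = 1) (y : ℤ) :
    ![(e : ZMod 4), y] ∈ orbit SL(2, ℤ) diagVec ∧ ![(y : ZMod 4), e] ∈ orbit SL(2, ℤ) diagVec := by
  refine ⟨⟨(⟨!![e, 0; y - e, e], by simp [Matrix.det_fin_two_of, he]⟩ : SL(2, ℤ)),
      (smul_diagVec _).trans ?_⟩,
    ⟨(⟨!![e, y - e; 0, e], by simp [Matrix.det_fin_two_of, he]⟩ : SL(2, ℤ)),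
      (smul_diagVec _).trans ?_⟩⟩ <;> simp

lemma orbit_diagVec : orbit SL(2, ℤ) diagVec = {w | ∀ u, w ≠ 2 • u} := by
  ext w
  constructor
  · rintro ⟨g, rfl⟩ u hu
    have hv : ∀ u, diagVec ≠ 2 • u := by decide
    exact hv (g⁻¹ • u) (by rw [smul_comm, ← hu, inv_smul_smul])
  · intro hw
    have hunit : w 0 = 1 ∨ w 0 = -1 ∨ w 1 = 1 ∨ w 1 = -1 := by revert w; decide
    have hw' : w = ![w 0, w 1] := by ext i; fin_cases i <;> rfl
    rcases hunit with h | h | h | h <;> rw [hw', h]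
    · simpa using (vec_mem_orbit_diagVec (e := 1) rfl (ZMod.cast (w 1))).1
    · simpa using (vec_mem_orbit_diagVec (e := -1) rfl (ZMod.cast (w 1))).1
    · simpa using (vec_mem_orbit_diagVec (e := 1) rfl (ZMod.cast (w 0))).2
    · simpa using (vec_mem_orbit_diagVec (e := -1) rfl (ZMod.cast (w 0))).2

lemma orbit_diagLine :
    orbit SL(2, ℤ) diagLine = (fun w => ({w, -w} : Finset _)) '' {w | ∀ u, w ≠ 2 • u} := by
  rw [← orbit_diagVec, orbit, orbit, ← Set.range_comp]
  exact congrArg Set.range (funext smul_diagLine)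

lemma index_stabilizer_diagLine : (stabilizer SL(2, ℤ) diagLine).index = 6 := by
  rw [index_stabilizer, orbit_diagLine, ← Finset.coe_filter_univ, ← Finset.coe_image,
    Set.ncard_coe_finset]
  decide

lemma GammaU_le_stabilizer : GammaU ≤ stabilizer SL(2, ℤ) diagLine := by
  rw [GammaU, Subgroup.closure_le]
  rintro _ (rfl | rfl | rfl | rfl) <;> apply mem_stabilizer_diagLine_of_smul_diagVec <;>
    rw [smul_diagVec] <;> decide

theorem map_conjX_GammaU : GammaU.map conjX = (Gamma 2).map (mapGL ℚ) := by
  refine le_antisymm (Subgroup.map_le_iff_le_comap.mpr fun A hA => ?_) ?_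
  · obtain ⟨C, hC, hAC⟩ :=
      exists_mem_Gamma_two_conjX_eq (dvd_of_mem_stabilizer_diagLine (GammaU_le_stabilizer hA))
    exact ⟨C, hC, hAC.symm⟩
  · rw [Gamma_two_eq_closure, MonoidHom.map_closure, Subgroup.closure_le]
    rintro _ ⟨C, hC, rfl⟩
    rcases hC with rfl | rfl | rfl
    · exact ⟨negI, Subgroup.subset_closure (by simp), by rw [conjX_eq_mapGL_iff]; decide⟩
    · exact ⟨Vmat ^ 2, Subgroup.subset_closure (by simp), by rw [conjX_eq_mapGL_iff]; decide⟩
    · exact ⟨Vmat * Smat, Subgroup.subset_closure (by simp), by rw [conjX_eq_mapGL_iff]; decide⟩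

theorem GammaU_eq_stabilizer : GammaU = stabilizer SL(2, ℤ) diagLine := by
  refine le_antisymm GammaU_le_stabilizer fun A hA => ?_
  obtain ⟨C, hC, hAC⟩ := exists_mem_Gamma_two_conjX_eq (dvd_of_mem_stabilizer_diagLine hA)
  obtain ⟨B, hB, hBC⟩ : mapGL ℚ C ∈ GammaU.map conjX := map_conjX_GammaU ▸ ⟨C, hC, rfl⟩
  rwa [conjX_injective (hBC.trans hAC.symm)] at hB

theorem GammaU_index_and_conjugate :
    Vmat = Tmat ^ 2 ∧
    GammaU.index = 6 ∧
    {A : Matrix (Fin 2) (Fin 2) ℚ | ∃ B ∈ GammaU,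
        A = Xmat⁻¹ * ((B : Matrix (Fin 2) (Fin 2) ℤ)).map (Int.cast : ℤ → ℚ) * Xmat}
      = {A : Matrix (Fin 2) (Fin 2) ℚ | ∃ B ∈ CongruenceSubgroup.Gamma 2,
        A = ((B : Matrix (Fin 2) (Fin 2) ℤ)).map (Int.cast : ℤ → ℚ)} := by
  refine ⟨by ext i j; fin_cases i <;> fin_cases j <;> rfl,
    GammaU_eq_stabilizer ▸ index_stabilizer_diagLine, ?_⟩
  ext A
  simp only [Set.mem_ofPred_eq, ← coe_conjX]
  constructor
  · rintro ⟨B, hB, rfl⟩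
    obtain ⟨C, hC, hCB⟩ := map_conjX_GammaU ▸ Subgroup.mem_map_of_mem conjX hB
    exact ⟨C, hC, by rw [← hCB]; rfl⟩
  · rintro ⟨C, hC, rfl⟩
    obtain ⟨B, hB, hBC⟩ := map_conjX_GammaU.symm ▸ Subgroup.mem_map_of_mem (mapGL ℚ) hC
    exact ⟨B, hB, by rw [hBC]; rfl⟩
end

section
/- For all τ in the complex upper half-plane ℍ and all z ∈ ℂ, θ_{0,1}(τ,z)·θ_{1,1}(τ,z) = (η(τ)²/η(τ/2))·θ_{1,1}(τ/2,z). -/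
/-- The Dedekind eta function `η(τ) = e^{πiτ/12} ∏_{n≥1} (1 − e^{2πinτ})`. -/
noncomputable def eta (τ : ℂ) : ℂ :=
  Complex.exp (Real.pi * Complex.I * τ / 12) *
    ∏' n : ℕ, (1 - Complex.exp (2 * Real.pi * Complex.I * (n + 1) * τ))

/-- The classical theta function
`θ_{μ,ν}(τ,z) = ∑_{n∈ℤ} e^{πinν} e^{πiτ(n+μ/2)²} e^{2πiz(n+μ/2)}`. -/
noncomputable def theta (μ ν : ℚ) (τ z : ℂ) : ℂ :=
  ∑' n : ℤ, Complex.exp (Real.pi * Complex.I * n * ν) *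
    Complex.exp (Real.pi * Complex.I * τ * (n + μ / 2) ^ 2) *
    Complex.exp (2 * Real.pi * Complex.I * z * (n + μ / 2))

/-!
Both theta functions are shifted Jacobi thetas `ϑ(u, τ) = ∑ₙ exp (2πinu + πin²τ)`. In the Cauchy
product `ϑ(u, τ) ϑ(u + τ/2, τ)` put `a = n + m` and `b = a - 2m`; since `n² + m² = (a² + b²)/2` the
double sum factors as `ϑ(u + τ/4, τ/2)` times a sum over `b ≡ a (mod 2)`, and the symmetry
`b ↦ 1 - b` makes the latter independent of `a`: it is `ϑ(τ/2, 2τ) = ∑ₙ w^(2n² + n)` with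
`w = e^{πiτ}`. The Jacobi triple product, obtained from its finite form (Gauss's `q`-binomial
theorem) by Tannery's theorem, writes this constant as `(w⁴; w⁴)∞ (-w; w⁴)∞ (-w³; w⁴)∞`, and
splitting `q`-Pochhammer symbols into even and odd factors identifies it with
`e^{-πiτ/8} η(τ)² / η(τ/2)`.
-/

open Complex hiding eta
open Filter Finset Topology
open scoped Real

section QBinomial

variable {K : Type*} [Field K] {q : K}

def finQPochhammer (x q : K) (n : ℕ) : K := ∏ j ∈ range n, (1 - x * q ^ j)

lemma finQPochhammer_zero (x q : K) : finQPochhammer x q 0 = 1 := prod_range_zero _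

lemma finQPochhammer_succ (x q : K) (n : ℕ) :
    finQPochhammer x q (n + 1) = finQPochhammer x q n * (1 - x * q ^ n) :=
  prod_range_succ _ _

lemma one_sub_mul_pow_self_ne_zero (hq : ∀ n : ℕ, q ^ (n + 1) ≠ 1) (n : ℕ) :
    1 - q * q ^ n ≠ 0 := by
  rw [← pow_succ']
  exact sub_ne_zero.2 (hq n).symm

lemma finQPochhammer_self_ne_zero (hq : ∀ n : ℕ, q ^ (n + 1) ≠ 1) (n : ℕ) :
    finQPochhammer q q n ≠ 0 :=
  prod_ne_zero_iff.2 fun j _ => one_sub_mul_pow_self_ne_zero hq j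

-- Only meaningful for `k ≤ n`: for `k > n` the truncated `n - k` gives a nonzero junk value.
def qBinomial (q : K) (n k : ℕ) : K :=
  finQPochhammer q q n / (finQPochhammer q q k * finQPochhammer q q (n - k))

lemma qBinomial_zero_right (hq : ∀ n : ℕ, q ^ (n + 1) ≠ 1) (n : ℕ) : qBinomial q n 0 = 1 := by
  rw [qBinomial, Nat.sub_zero, finQPochhammer_zero, one_mul,
    div_self (finQPochhammer_self_ne_zero hq n)]

lemma qBinomial_self (hq : ∀ n : ℕ, q ^ (n + 1) ≠ 1) (n : ℕ) : qBinomial q n n = 1 := by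
  rw [qBinomial, Nat.sub_self, finQPochhammer_zero, mul_one,
    div_self (finQPochhammer_self_ne_zero hq n)]

lemma qBinomial_add_succ_succ (hq : ∀ n : ℕ, q ^ (n + 1) ≠ 1) (k b : ℕ) :
    qBinomial q (k + b + 2) (k + 1) =
      qBinomial q (k + b + 1) (k + 1) + q ^ (b + 1) * qBinomial q (k + b + 1) k := by
  rw [qBinomial, qBinomial, qBinomial, show k + b + 2 - (k + 1) = b + 1 by omega,
    show k + b + 1 - (k + 1) = b by omega, show k + b + 1 - k = b + 1 by omega,
    finQPochhammer_succ _ _ (k + b + 1), finQPochhammer_succ _ _ k, finQPochhammer_succ _ _ b]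
  have := finQPochhammer_self_ne_zero hq k
  have := finQPochhammer_self_ne_zero hq b
  have := one_sub_mul_pow_self_ne_zero hq k
  have := one_sub_mul_pow_self_ne_zero hq b
  field_simp
  ring

lemma two_mul_choose_two (k : ℕ) : (2 * k.choose 2 : ℤ) = k ^ 2 - k := by
  induction k with
  | zero => simp
  | succ k ih =>
    rw [Nat.choose_succ_succ', Nat.choose_one_right]
    push_cast
    linear_combination ih

theorem finQPochhammer_eq_sum_qBinomial (hq : ∀ n : ℕ, q ^ (n + 1) ≠ 1) (x : K) (n : ℕ) :
    finQPochhammer x q n =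
      ∑ k ∈ range (n + 1), qBinomial q n k * q ^ k.choose 2 * (-x) ^ k := by
  induction n with
  | zero => simp [finQPochhammer, qBinomial_zero_right hq]
  | succ n ih =>
    set a : ℕ → K := fun k => qBinomial q n k * q ^ k.choose 2 * (-x) ^ k
    have hpascal : ∀ k ∈ range n,
        qBinomial q (n + 1) (k + 1) * q ^ (k + 1).choose 2 * (-x) ^ (k + 1) = a (k + 1) + a k * (-x * q ^ n) := by
      intro k hk
      obtain ⟨b, rfl⟩ : ∃ b, n = k + b + 1 := ⟨n - k - 1, by grind⟩
      simp only [a, qBinomial_add_succ_succ hq, Nat.choose_succ_succ', Nat.choose_one_right]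
      ring
    have htop : qBinomial q (n + 1) (n + 1) * q ^ (n + 1).choose 2 * (-x) ^ (n + 1)
        = a n * (-x * q ^ n) := by
      simp only [a, qBinomial_self hq, Nat.choose_succ_succ', Nat.choose_one_right]
      ring
    rw [finQPochhammer_succ, ih,
      sum_range_succ' (fun k => qBinomial q (n + 1) k * q ^ k.choose 2 * (-x) ^ k),
      sum_range_succ (fun k => qBinomial q (n + 1) (k + 1) * q ^ (k + 1).choose 2 * (-x) ^ (k + 1)),
      sum_congr rfl hpascal, htop, sum_add_distrib,
      show (∑ k ∈ range (n + 1), a k) * (1 - x * q ^ n)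
        = ∑ k ∈ range (n + 1), a k + (∑ k ∈ range (n + 1), a k) * (-x * q ^ n) by ring]
    nth_rewrite 1 [sum_range_succ' a]
    rw [sum_range_succ a n, add_mul, sum_mul]
    simp only [a, qBinomial_zero_right hq]
    ring

lemma pow_choose_two_mul_pow_eq (hq0 : q ≠ 0) {z : K} (hz : z ≠ 0) (N k : ℕ) :
    (q ^ 2) ^ k.choose 2 * (z * (q ^ (2 * N))⁻¹ * q) ^ k =
      z ^ N * (q ^ (N ^ 2))⁻¹ * (q ^ (((k : ℤ) - N) ^ 2) * z ^ ((k : ℤ) - N)) := by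
  have hexp : ((k : ℤ) - N) ^ 2 =
      ((2 * k.choose 2 : ℕ) : ℤ) + k - ((2 * N * k : ℕ) : ℤ) + ((N ^ 2 : ℕ) : ℤ) := by
    push_cast
    rw [two_mul_choose_two]
    ring
  rw [hexp, zpow_add₀ hq0, zpow_sub₀ hq0, zpow_add₀ hq0, zpow_sub₀ hz]
  simp only [zpow_natCast, mul_pow, inv_pow, ← pow_mul]
  field_simp

lemma prod_range_pow_two_mul_add_one (q : K) (N : ℕ) :
    ∏ i ∈ range N, q ^ (2 * i + 1) = q ^ (N ^ 2) := by
  induction N with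
  | zero => simp
  | succ N ih => rw [prod_range_succ, ih, ← pow_add]; ring_nf

lemma sum_Icc_neg_eq_sum_range (f : ℤ → K) (N : ℕ) :
    ∑ m ∈ Icc (-N : ℤ) N, f m = ∑ k ∈ range (2 * N + 1), f ((k : ℤ) - N) := by
  refine sum_nbij' (fun m => (m + N).toNat) (fun k => (k : ℤ) - N) ?_ ?_ ?_ ?_ ?_ <;>
    intro m hm <;> simp only [mem_Icc, mem_range] at hm ⊢
  all_goals first | omega | (congr 1; omega)

theorem finite_jacobi_triple_product (hq0 : q ≠ 0) (hq : ∀ n : ℕ, (q ^ 2) ^ (n + 1) ≠ 1)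
    {z : K} (hz : z ≠ 0) (N : ℕ) :
    ∑ m ∈ Icc (-N : ℤ) N, qBinomial (q ^ 2) (2 * N) (N + m).toNat * (q ^ (m ^ 2) * z ^ m) =
      finQPochhammer (-(z * q)) (q ^ 2) N * finQPochhammer (-(z⁻¹ * q)) (q ^ 2) N := by
  -- Gauss's theorem at `x = -z q^(1 - 2N)`: its factors `j = N + i` are `1 + z q^(2i + 1)`, and
  -- its factors `j = N - 1 - i` are `z q^-(2i + 1) (1 + z⁻¹ q^(2i + 1))`.
  set y := z * (q ^ (2 * N))⁻¹ * q
  have hprod : finQPochhammer (-y) (q ^ 2) (2 * N) = z ^ N * (q ^ (N ^ 2))⁻¹ *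
      (finQPochhammer (-(z * q)) (q ^ 2) N * finQPochhammer (-(z⁻¹ * q)) (q ^ 2) N) := by
    have hlow : ∀ i ∈ range N, 1 - -y * (q ^ 2) ^ (N - 1 - i) =
        z * (q ^ (2 * i + 1))⁻¹ * (1 - -(z⁻¹ * q) * (q ^ 2) ^ i) := by
      intro i hi
      obtain ⟨j, rfl⟩ : ∃ j, N = i + j + 1 := ⟨N - i - 1, by grind⟩
      rw [show i + j + 1 - 1 - i = j by omega]
      simp only [y]
      field_simp
      ring
    have hhigh : ∀ i ∈ range N, 1 - -y * (q ^ 2) ^ (N + i) = 1 - -(z * q) * (q ^ 2) ^ i := by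
      intro i _
      simp only [y]
      field_simp
      ring
    rw [finQPochhammer, two_mul, prod_range_add, ← prod_range_reflect, prod_congr rfl hlow,
      prod_congr rfl hhigh, prod_mul_distrib, prod_mul_distrib, prod_const, card_range,
      prod_inv_distrib, prod_range_pow_two_mul_add_one, finQPochhammer, finQPochhammer]
    ring
  have hsum :
      ∑ k ∈ range (2 * N + 1), qBinomial (q ^ 2) (2 * N) k * (q ^ 2) ^ k.choose 2 * (- -y) ^ k
      = z ^ N * (q ^ (N ^ 2))⁻¹ * ∑ m ∈ Icc (-N : ℤ) N,
          qBinomial (q ^ 2) (2 * N) (N + m).toNat * (q ^ (m ^ 2) * z ^ m) := by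
    rw [sum_Icc_neg_eq_sum_range, mul_sum]
    refine sum_congr rfl fun k hk => ?_
    rw [neg_neg, mul_assoc, pow_choose_two_mul_pow_eq hq0 hz,
      show ((N : ℤ) + (k - N)).toNat = k by omega]
    ring
  have hzq : z ^ N * (q ^ (N ^ 2))⁻¹ ≠ 0 := by positivity
  rw [← mul_right_inj' hzq, ← hsum, ← finQPochhammer_eq_sum_qBinomial hq, hprod]

end QBinomial

section QPochhammer

variable {x q : ℂ}

noncomputable def qPochhammer (x q : ℂ) : ℂ := ∏' n : ℕ, (1 - x * q ^ n)

lemma summable_norm_mul_pow (x : ℂ) (hq : ‖q‖ < 1) : Summable fun n : ℕ => ‖x * q ^ n‖ := by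
  simpa [norm_mul, norm_pow] using (summable_geometric_of_lt_one (norm_nonneg q) hq).mul_left ‖x‖

lemma multipliable_one_sub_mul_pow (x : ℂ) (hq : ‖q‖ < 1) :
    Multipliable fun n : ℕ => 1 - x * q ^ n := by
  simpa [sub_eq_add_neg] using
    Complex.multipliable_one_add_of_summable (summable_norm_mul_pow x hq).of_norm.neg

lemma tendsto_finQPochhammer (x : ℂ) (hq : ‖q‖ < 1) :
    Tendsto (finQPochhammer x q) atTop (𝓝 (qPochhammer x q)) :=
  (multipliable_one_sub_mul_pow x hq).hasProd.tendsto_prod_nat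

lemma qPochhammer_ne_zero (hx : ‖x‖ < 1) (hq : ‖q‖ < 1) : qPochhammer x q ≠ 0 := by
  have hterm : ∀ n : ℕ, 1 + -(x * q ^ n) ≠ 0 := fun n h => by
    have h1 : ‖x * q ^ n‖ < 1 := by
      rw [norm_mul, norm_pow]
      exact mul_lt_one_of_nonneg_of_lt_one_left (norm_nonneg x) hx
        (pow_le_one₀ (norm_nonneg q) hq.le)
    rw [← add_neg_eq_zero.1 h, norm_one] at h1
    exact lt_irrefl 1 h1
  rw [qPochhammer]
  simpa [sub_eq_add_neg] using
    tprod_one_add_ne_zero_of_summable hterm (by simpa using summable_norm_mul_pow x hq)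

lemma qPochhammer_eq_mul_sq (x : ℂ) (hq : ‖q‖ < 1) :
    qPochhammer x q = qPochhammer x (q ^ 2) * qPochhammer (x * q) (q ^ 2) := by
  have hq2 : ‖q ^ 2‖ < 1 := by rw [norm_pow]; exact pow_lt_one₀ (norm_nonneg q) hq two_ne_zero
  have heven : ∀ k : ℕ, 1 - x * q ^ (2 * k) = 1 - x * (q ^ 2) ^ k := fun k => by ring
  have hodd : ∀ k : ℕ, 1 - x * q ^ (2 * k + 1) = 1 - x * q * (q ^ 2) ^ k := fun k => by ring
  rw [qPochhammer, ← tprod_even_mul_odd, qPochhammer, qPochhammer]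
  · simp only [heven, hodd]
  · simpa only [heven] using multipliable_one_sub_mul_pow x hq2
  · simpa only [hodd] using multipliable_one_sub_mul_pow (x * q) hq2

lemma qPochhammer_mul_qPochhammer_neg (x : ℂ) (hq : ‖q‖ < 1) :
    qPochhammer x q * qPochhammer (-x) q = qPochhammer (x ^ 2) (q ^ 2) := by
  rw [qPochhammer, qPochhammer, qPochhammer, ← (multipliable_one_sub_mul_pow x hq).tprod_mul
    (multipliable_one_sub_mul_pow (-x) hq)]
  exact tprod_congr fun n => by ring

lemma exists_norm_qBinomial_le (hq : ‖q‖ < 1) : ∃ C, ∀ n k, ‖qBinomial q n k‖ ≤ C := by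
  have hP := tendsto_finQPochhammer q hq
  obtain ⟨A, hA⟩ := isBounded_iff_forall_norm_le.1 (Metric.isBounded_range_of_tendsto _ hP)
  obtain ⟨B, hB⟩ := isBounded_iff_forall_norm_le.1
    (Metric.isBounded_range_of_tendsto _ (hP.inv₀ (qPochhammer_ne_zero hq hq)))
  have hB0 : 0 ≤ B := (norm_nonneg _).trans (hB _ ⟨0, rfl⟩)
  refine ⟨A * (B * B), fun n k => ?_⟩
  rw [qBinomial, div_eq_mul_inv, mul_inv, norm_mul, norm_mul]
  exact mul_le_mul (hA _ ⟨n, rfl⟩) (mul_le_mul (hB _ ⟨k, rfl⟩) (hB _ ⟨n - k, rfl⟩)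
    (norm_nonneg _) hB0) (by positivity) ((norm_nonneg _).trans (hA _ ⟨0, rfl⟩))

lemma tendsto_qBinomial (hq : ‖q‖ < 1) {n k : ℕ → ℕ} (hk : Tendsto k atTop atTop)
    (hnk : Tendsto (fun N => n N - k N) atTop atTop) :
    Tendsto (fun N => qBinomial q (n N) (k N)) atTop (𝓝 (qPochhammer q q)⁻¹) := by
  have hP := tendsto_finQPochhammer q hq
  have hP0 := qPochhammer_ne_zero hq hq
  have hn : Tendsto n atTop atTop := tendsto_atTop_mono (fun N => Nat.sub_le _ _) hnk
  rw [← div_mul_cancel_left₀ hP0]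
  exact (hP.comp hn).div ((hP.comp hk).mul (hP.comp hnk)) (mul_ne_zero hP0 hP0)

end QPochhammer

lemma jacobiTheta₂_term_eq_zpow (n : ℤ) (ζ τ : ℂ) :
    jacobiTheta₂_term n ζ τ = cexp (π * I * τ) ^ (n ^ 2) * cexp (2 * π * I * ζ) ^ n := by
  rw [jacobiTheta₂_term, ← exp_int_mul, ← exp_int_mul, ← exp_add]
  congr 1
  push_cast
  ring

lemma summable_norm_zpow_sq_mul_zpow {q z : ℂ} (hq0 : q ≠ 0) (hq : ‖q‖ < 1) (hz : z ≠ 0) :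
    Summable fun m : ℤ => ‖q ^ (m ^ 2) * z ^ m‖ := by
  obtain ⟨τ, hτ, rfl⟩ : ∃ τ : ℂ, 0 < τ.im ∧ cexp (π * I * τ) = q := by
    refine ⟨I * (-log q / π), ?_, ?_⟩
    · simp only [mul_im, I_re, div_ofReal_im, neg_im, zero_mul, I_im, div_ofReal_re, neg_re,
        log_re, one_mul, zero_add]
      exact div_pos (neg_pos.2 (Real.log_neg (norm_pos_iff.2 hq0) hq)) Real.pi_pos
    · rw [show (π : ℂ) * I * (I * (-log q / π)) = log q by
        field_simp; linear_combination (-log q) * I_sq, exp_log hq0]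
  obtain ⟨ζ, rfl⟩ : ∃ ζ : ℂ, cexp (2 * π * I * ζ) = z := by
    refine ⟨I * (-log z / (2 * π)), ?_⟩
    rw [show 2 * (π : ℂ) * I * (I * (-log z / (2 * π))) = log z by
      field_simp; linear_combination (-log z) * I_sq, exp_log hz]
  simpa only [jacobiTheta₂_term_eq_zpow] using
    summable_norm_iff.2 ((summable_jacobiTheta₂_term_iff ζ τ).2 hτ)

theorem jacobi_triple_product {q z : ℂ} (hq0 : q ≠ 0) (hq : ‖q‖ < 1) (hz : z ≠ 0) :
    ∑' m : ℤ, q ^ (m ^ 2) * z ^ m = qPochhammer (q ^ 2) (q ^ 2) *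
      qPochhammer (-(z * q)) (q ^ 2) * qPochhammer (-(z⁻¹ * q)) (q ^ 2) := by
  have hQ : ‖q ^ 2‖ < 1 := by rw [norm_pow]; exact pow_lt_one₀ (norm_nonneg q) hq two_ne_zero
  have hQ1 : ∀ n : ℕ, (q ^ 2) ^ (n + 1) ≠ 1 := fun n h => by
    have := pow_lt_one₀ (norm_nonneg _) hQ n.succ_ne_zero
    rw [← norm_pow, h, norm_one] at this
    exact lt_irrefl 1 this
  let F : ℕ → ℤ → ℂ := fun N m => if m ∈ Icc (-N : ℤ) N then
    qBinomial (q ^ 2) (2 * N) (N + m).toNat * (q ^ (m ^ 2) * z ^ m) else 0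
  have hF : ∀ N, ∑' m, F N m =
      finQPochhammer (-(z * q)) (q ^ 2) N * finQPochhammer (-(z⁻¹ * q)) (q ^ 2) N := fun N => by
    rw [tsum_eq_sum (s := Icc (-N : ℤ) N) fun m hm => if_neg hm,
      ← finite_jacobi_triple_product hq0 hQ1 hz]
    exact sum_congr rfl fun m hm => if_pos hm
  have hlim : ∀ m : ℤ, Tendsto (F · m) atTop
      (𝓝 ((qPochhammer (q ^ 2) (q ^ 2))⁻¹ * (q ^ (m ^ 2) * z ^ m))) := fun m => by
    have hcoeff := tendsto_qBinomial hQ (n := fun N => 2 * N) (k := fun N => (N + m).toNat)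
      (tendsto_atTop_atTop.2 fun b => ⟨b + m.natAbs, fun N hN => by omega⟩)
      (tendsto_atTop_atTop.2 fun b => ⟨b + m.natAbs, fun N hN => by omega⟩)
    refine (hcoeff.mul_const _).congr' ?_
    filter_upwards [eventually_ge_atTop m.natAbs] with N hN
    exact (if_pos (mem_Icc.2 (by omega))).symm
  obtain ⟨C, hC⟩ := exists_norm_qBinomial_le hQ
  have hbound : ∀ N m, ‖F N m‖ ≤ C * ‖q ^ (m ^ 2) * z ^ m‖ := fun N m => by
    simp only [F]
    split_ifs
    · rw [norm_mul]
      exact mul_le_mul_of_nonneg_right (hC _ _) (norm_nonneg _)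
    · rw [norm_zero]
      exact mul_nonneg ((norm_nonneg _).trans (hC 0 0)) (norm_nonneg _)
  have hJ := tendsto_tsum_of_dominated_convergence
    ((summable_norm_zpow_sq_mul_zpow hq0 hq hz).mul_left C) hlim (.of_forall hbound)
  simp only [hF, tsum_mul_left] at hJ
  have hprod := tendsto_nhds_unique hJ
    ((tendsto_finQPochhammer (-(z * q)) hQ).mul (tendsto_finQPochhammer (-(z⁻¹ * q)) hQ))
  rw [mul_assoc, ← hprod, mul_inv_cancel_left₀ (qPochhammer_ne_zero hQ hQ)]

lemma norm_cexp_pi_mul_I_mul_lt_one {τ : ℂ} (hτ : 0 < τ.im) : ‖cexp (π * I * τ)‖ < 1 := by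
  rw [norm_exp, Real.exp_lt_one_iff]
  simp only [mul_re, ofReal_re, I_re, mul_zero, ofReal_im, I_im, zero_sub, mul_im, zero_mul,
    add_zero, mul_one, sub_zero]
  nlinarith [Real.pi_pos]

lemma theta_eq_jacobiTheta₂ (μ ν : ℚ) (τ z : ℂ) :
    theta μ ν τ z = cexp (π * I * τ * μ ^ 2 / 4 + π * I * z * μ) *
      jacobiTheta₂ (z + ν / 2 + μ * τ / 2) τ := by
  rw [theta, jacobiTheta₂, ← tsum_mul_left]
  refine tsum_congr fun n => ?_
  rw [jacobiTheta₂_term, ← exp_add, ← exp_add, ← exp_add]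
  congr 1
  ring

lemma tsum_sub_two_mul_eq_tsum_two_mul {α : Type*} [AddCommMonoid α] [TopologicalSpace α]
    {g : ℤ → α} (hg : ∀ b, g (1 - b) = g b) (a : ℤ) :
    ∑' m, g (a - 2 * m) = ∑' m, g (2 * m) := by
  obtain ⟨k, rfl | rfl⟩ := Int.even_or_odd' a
  · calc ∑' m, g (2 * k - 2 * m) = ∑' m, g (2 * Equiv.subLeft k m) :=
          tsum_congr fun m => by simp [mul_sub]
      _ = ∑' m, g (2 * m) := (Equiv.subLeft k).tsum_eq fun m => g (2 * m)
  · calc ∑' m, g (2 * k + 1 - 2 * m) = ∑' m, g (2 * Equiv.subRight k m) :=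
          tsum_congr fun m => by rw [← hg, Equiv.subRight_apply]; ring_nf
      _ = ∑' m, g (2 * m) := (Equiv.subRight k).tsum_eq fun m => g (2 * m)

lemma jacobiTheta₂_mul_jacobiTheta₂_add_half (u : ℂ) {τ : ℂ} (hτ : 0 < τ.im) :
    jacobiTheta₂ u τ * jacobiTheta₂ (u + τ / 2) τ =
      jacobiTheta₂ (u + τ / 4) (τ / 2) * jacobiTheta₂ (τ / 2) (2 * τ) := by
  have hτ2 : 0 < (τ / 2).im := by simpa using hτ
  have hu := summable_norm_iff.2 ((summable_jacobiTheta₂_term_iff u τ).2 hτ)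
  have hv := summable_norm_iff.2 ((summable_jacobiTheta₂_term_iff (u + τ / 2) τ).2 hτ)
  set g : ℤ → ℂ := fun b => jacobiTheta₂_term b (-τ / 4) (τ / 2)
  have hg : Summable g := (summable_jacobiTheta₂_term_iff _ _).2 hτ2
  have hterm : ∀ p : ℤ × ℤ, jacobiTheta₂_term (p.1 - p.2) u τ * jacobiTheta₂_term p.2 (u + τ / 2) τ
      = jacobiTheta₂_term p.1 (u + τ / 4) (τ / 2) * g (p.1 - 2 * p.2) := fun p => by
    simp only [g, jacobiTheta₂_term, ← exp_add]
    congr 1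
    push_cast
    ring
  have hg_symm : ∀ b, g (1 - b) = g b := fun b => by
    simp only [g, jacobiTheta₂_term]
    congr 1
    push_cast
    ring
  have hg_even : ∀ m, g (2 * m) = jacobiTheta₂_term m (-(τ / 2)) (2 * τ) := fun m => by
    simp only [g, jacobiTheta₂_term]
    congr 1
    push_cast
    ring
  let e : ℤ × ℤ ≃ ℤ × ℤ :=
    { toFun p := (p.1 - p.2, p.2)
      invFun p := (p.1 + p.2, p.2)
      left_inv p := by simp
      right_inv p := by simp }
  have hsum : Summable fun p : ℤ × ℤ =>
      jacobiTheta₂_term p.1 (u + τ / 4) (τ / 2) * g (p.1 - 2 * p.2) :=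
    ((e.summable_iff.2 (summable_mul_of_summable_norm hu hv)).congr hterm)
  have hfiber : ∀ a : ℤ,
      Summable fun m => jacobiTheta₂_term a (u + τ / 4) (τ / 2) * g (a - 2 * m) :=
    fun a => (hg.comp_injective fun m n h => by simpa using h).mul_left _
  rw [jacobiTheta₂, jacobiTheta₂, tsum_mul_tsum_of_summable_norm hu hv, ← e.tsum_eq]
  simp only [e, Equiv.coe_fn_mk, hterm]
  rw [hsum.tsum_prod' hfiber]
  simp only [tsum_mul_left, tsum_sub_two_mul_eq_tsum_two_mul hg_symm, hg_even]
  rw [tsum_mul_right, ← jacobiTheta₂, ← jacobiTheta₂, jacobiTheta₂_neg_left]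

lemma eta_eq_qPochhammer (τ : ℂ) : eta τ =
    cexp (π * I * τ / 12) * qPochhammer (cexp (2 * π * I * τ)) (cexp (2 * π * I * τ)) := by
  rw [eta, qPochhammer]
  congr 1
  refine tprod_congr fun n => ?_
  rw [← pow_succ', ← exp_nat_mul]
  push_cast
  ring_nf

lemma eta_ne_zero {τ : ℂ} (hτ : 0 < τ.im) : eta τ ≠ 0 := by
  have hw : ‖cexp (2 * π * I * τ)‖ < 1 := by
    rw [show 2 * π * I * τ = π * I * (2 * τ) by ring]
    exact norm_cexp_pi_mul_I_mul_lt_one (by simpa using hτ)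
  rw [eta_eq_qPochhammer]
  exact mul_ne_zero (exp_ne_zero _) (qPochhammer_ne_zero hw hw)

lemma eta_sq_eq_jacobiTheta₂_mul_eta_half {τ : ℂ} (hτ : 0 < τ.im) :
    eta τ ^ 2 = cexp (π * I * τ / 8) * jacobiTheta₂ (τ / 2) (2 * τ) * eta (τ / 2) := by
  set w := cexp (π * I * τ)
  have hw : ‖w‖ < 1 := norm_cexp_pi_mul_I_mul_lt_one hτ
  have hw2 : ‖w ^ 2‖ < 1 := by rw [norm_pow]; exact pow_lt_one₀ (norm_nonneg w) hw two_ne_zero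
  have hw0 : w ≠ 0 := exp_ne_zero _
  have hpow : ∀ n : ℕ, ∀ c : ℂ, c = n * (π * I * τ) → cexp c = w ^ n := by
    rintro n c rfl
    exact exp_nat_mul _ n
  have hθ : jacobiTheta₂ (τ / 2) (2 * τ) = ∑' m : ℤ, (w ^ 2) ^ (m ^ 2) * w ^ m := by
    refine tsum_congr fun m => ?_
    rw [jacobiTheta₂_term_eq_zpow, hpow 2 _ (by ring), hpow 1 _ (by ring), pow_one]
  have hJ : jacobiTheta₂ (τ / 2) (2 * τ) =
      qPochhammer (w ^ 4) (w ^ 4) * qPochhammer (-w ^ 3) (w ^ 4) * qPochhammer (-w) (w ^ 4) := by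
    rw [hθ, jacobi_triple_product (pow_ne_zero 2 hw0) hw2 hw0,
      show w⁻¹ * w ^ 2 = w by field_simp, show w * w ^ 2 = w ^ 3 by ring, ← pow_mul]
  have hsplit₁ : qPochhammer w w = qPochhammer w (w ^ 2) * qPochhammer (w ^ 2) (w ^ 2) := by
    rw [qPochhammer_eq_mul_sq w hw, ← sq]
  have hsplit₂ : qPochhammer (w ^ 2) (w ^ 2) =
      qPochhammer (w ^ 2) (w ^ 4) * qPochhammer (w ^ 4) (w ^ 4) := by
    convert qPochhammer_eq_mul_sq (w ^ 2) hw2 using 3 <;> ring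
  have hsplit₃ : qPochhammer (-w) (w ^ 4) * qPochhammer (-w ^ 3) (w ^ 4) =
      qPochhammer (-w) (w ^ 2) := by
    convert (qPochhammer_eq_mul_sq (-w) hw2).symm using 3 <;> ring
  have hneg : qPochhammer w (w ^ 2) * qPochhammer (-w) (w ^ 2) = qPochhammer (w ^ 2) (w ^ 4) := by
    convert qPochhammer_mul_qPochhammer_neg w hw2 using 2
    ring
  have hexp :
      cexp (π * I * τ / 12) ^ 2 = cexp (π * I * τ / 8) * cexp (π * I * (τ / 2) / 12) := by
    rw [← exp_nat_mul, ← exp_add]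
    ring_nf
  rw [eta_eq_qPochhammer, eta_eq_qPochhammer, hpow 2 (2 * π * I * τ) (by ring),
    hpow 1 (2 * π * I * (τ / 2)) (by ring), pow_one, hJ, hsplit₁]
  linear_combination qPochhammer (w ^ 2) (w ^ 2) ^ 2 * hexp +
    cexp (π * I * τ / 8) * cexp (π * I * (τ / 2) / 12) * qPochhammer (w ^ 2) (w ^ 2) *
      (hsplit₂ - qPochhammer (w ^ 4) (w ^ 4) * hneg -
        qPochhammer (w ^ 4) (w ^ 4) * qPochhammer w (w ^ 2) * hsplit₃)

theorem theta_halving (τ : ℂ) (hτ : 0 < τ.im) (z : ℂ) :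
    theta 0 1 τ z * theta 1 1 τ z = eta τ ^ 2 / eta (τ / 2) * theta 1 1 (τ / 2) z := by
  have hθ := jacobiTheta₂_mul_jacobiTheta₂_add_half (z + 2⁻¹) hτ
  have hexp : cexp (π * I * τ / 4 + π * I * z) =
      cexp (π * I * τ / 8) * cexp (π * I * (τ / 2) / 4 + π * I * z) := by
    rw [← exp_add]
    ring_nf
  rw [theta_eq_jacobiTheta₂, theta_eq_jacobiTheta₂, theta_eq_jacobiTheta₂,
    eta_sq_eq_jacobiTheta₂_mul_eta_half hτ,
    mul_div_cancel_right₀ _ (eta_ne_zero (by simpa using hτ))]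
  simp only [Rat.cast_zero, Rat.cast_one, ne_eq, OfNat.ofNat_ne_zero, not_false_eq_true, zero_pow,
    mul_zero, zero_div, add_zero, exp_zero, one_div, zero_mul, one_mul, one_pow, mul_one, div_div,
    show (2 : ℂ) * 2 = 4 by norm_num]
  rw [hexp]
  linear_combination cexp (π * I * τ / 8) * cexp (π * I * (τ / 2) / 4 + π * I * z) * hθ
end

section
/- For all τ in the complex upper half-plane ℍ: ∑_{n∈ℤ} (−1)ⁿ e^{πiτn²} = η(τ/2)² / η(τ). -/
open Finset

section GaussianBinomial

variable {K : Type*} [Field K]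

/-- The `q`-Pochhammer symbol `(x; x)_k`. -/
def qPoch (x : K) (k : ℕ) : K := ∏ j ∈ range k, (1 - x ^ (j + 1))

lemma qPoch_zero (x : K) : qPoch x 0 = 1 := prod_range_zero _

lemma qPoch_succ (x : K) (k : ℕ) : qPoch x (k + 1) = qPoch x k * (1 - x ^ (k + 1)) :=
  prod_range_succ _ _

variable {x : K}

lemma qPoch_ne_zero (hx : ∀ j : ℕ, x ^ (j + 1) ≠ 1) (k : ℕ) : qPoch x k ≠ 0 :=
  prod_ne_zero_iff.2 fun j _ ↦ sub_ne_zero.2 (hx j).symm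

/-- The Gaussian binomial coefficient `[m, k]_x`, extended by zero to all `k : ℤ`. -/
def gaussBinom (x : K) (m : ℕ) (k : ℤ) : K :=
  if 0 ≤ k ∧ k ≤ m then qPoch x m / (qPoch x k.toNat * qPoch x (m - k.toNat)) else 0

lemma gaussBinom_eq_zero {m : ℕ} {k : ℤ} (hk : ¬(0 ≤ k ∧ k ≤ m)) :
    gaussBinom x m k = 0 :=
  if_neg hk

lemma gaussBinom_add_left (x : K) (a b : ℕ) :
    gaussBinom x (a + b) a = qPoch x (a + b) / (qPoch x a * qPoch x b) := by
  rw [gaussBinom, if_pos (by omega), Int.toNat_natCast, Nat.add_sub_cancel_left]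

lemma gaussBinom_zero_right (hx : ∀ j : ℕ, x ^ (j + 1) ≠ 1) (m : ℕ) :
    gaussBinom x m 0 = 1 := by
  simpa [qPoch_zero, qPoch_ne_zero hx] using gaussBinom_add_left x 0 m

lemma gaussBinom_symm (m : ℕ) (k : ℤ) : gaussBinom x m (m - k) = gaussBinom x m k := by
  by_cases hk : 0 ≤ k ∧ k ≤ m
  · rw [gaussBinom, gaussBinom, if_pos (by omega), if_pos hk, mul_comm]
    congr 3 <;> omega
  · rw [gaussBinom_eq_zero hk, gaussBinom_eq_zero (by omega)]

lemma gaussBinom_self (hx : ∀ j : ℕ, x ^ (j + 1) ≠ 1) (m : ℕ) : gaussBinom x m m = 1 := by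
  simpa using (gaussBinom_symm m 0).trans (gaussBinom_zero_right hx m)

lemma gaussBinom_succ_eq_pow_mul_add (hx : ∀ j : ℕ, x ^ (j + 1) ≠ 1) (m : ℕ) (k : ℤ) :
    gaussBinom x (m + 1) k = x ^ k * gaussBinom x m k + gaussBinom x m (k - 1) := by
  rcases lt_or_ge k 1 with hk | hk
  · obtain rfl | hk : k = 0 ∨ k < 0 := by omega
    · simp [gaussBinom_zero_right hx, gaussBinom_eq_zero]
    · rw [gaussBinom_eq_zero (by omega), gaussBinom_eq_zero (by omega),
        gaussBinom_eq_zero (by omega), mul_zero, add_zero]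
  rcases lt_or_ge (m : ℤ) k with hm | hm
  · obtain rfl | hm : k = m + 1 ∨ m + 1 < k := by omega
    · have h := gaussBinom_self hx (m + 1)
      push_cast at h
      rw [h, gaussBinom_eq_zero (by omega), add_sub_cancel_right, gaussBinom_self hx, mul_zero,
        zero_add]
    · rw [gaussBinom_eq_zero (by omega), gaussBinom_eq_zero (by omega),
        gaussBinom_eq_zero (by omega), mul_zero, add_zero]
  obtain ⟨a, rfl⟩ : ∃ a : ℕ, k = ((a + 1 : ℕ) : ℤ) := ⟨(k - 1).toNat, by omega⟩
  obtain ⟨b, rfl⟩ : ∃ b : ℕ, m = a + 1 + b := ⟨m - a - 1, by omega⟩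
  rw [zpow_natCast, Nat.cast_succ, add_sub_cancel_right, ← Nat.cast_succ,
    show a + 1 + b + 1 = (a + 1) + (b + 1) by ring, gaussBinom_add_left, gaussBinom_add_left,
    show a + 1 + b = a + (b + 1) by ring, gaussBinom_add_left,
    show a + 1 + (b + 1) = a + (b + 1) + 1 by ring, qPoch_succ _ (a + (b + 1)), qPoch_succ x a,
    qPoch_succ x b]
  have := qPoch_ne_zero hx a
  have := qPoch_ne_zero hx b
  have := sub_ne_zero.2 (hx a).symm
  have := sub_ne_zero.2 (hx b).symm
  field_simp
  ring

lemma gaussBinom_succ_eq_add_pow_mul (hx : ∀ j : ℕ, x ^ (j + 1) ≠ 1) (m : ℕ) (k : ℤ) :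
    gaussBinom x (m + 1) k =
      gaussBinom x m k + x ^ ((m : ℤ) + 1 - k) * gaussBinom x m (k - 1) := by
  rw [← gaussBinom_symm (m + 1) k, gaussBinom_succ_eq_pow_mul_add hx, add_comm]
  push_cast
  rw [show (m : ℤ) + 1 - k - 1 = m - k by ring, gaussBinom_symm,
    show (m : ℤ) + 1 - k = m - (k - 1) by ring, gaussBinom_symm]

lemma gaussBinom_add_two (hx : ∀ j : ℕ, x ^ (j + 1) ≠ 1) (hx₀ : x ≠ 0) (m : ℕ) (k : ℤ) :
    gaussBinom x (m + 2) k =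
      x ^ k * gaussBinom x m k + (1 + x ^ (m + 1)) * gaussBinom x m (k - 1)
        + x ^ ((m : ℤ) + 2 - k) * gaussBinom x m (k - 2) := by
  have hexp : x ^ ((m : ℤ) + 2 - k) * x ^ (k - 1) = x ^ (m + 1) := by
    rw [← zpow_add₀ hx₀, show (m : ℤ) + 2 - k + (k - 1) = (m + 1 : ℕ) by push_cast; ring,
      zpow_natCast]
  rw [gaussBinom_succ_eq_add_pow_mul hx, gaussBinom_succ_eq_pow_mul_add hx,
    gaussBinom_succ_eq_pow_mul_add hx, sub_sub, one_add_one_eq_two]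
  push_cast
  rw [add_assoc (m : ℤ), one_add_one_eq_two]
  linear_combination gaussBinom x m (k - 1) * hexp

end GaussianBinomial

lemma sum_Icc_comp_add_eq {M : Type*} [AddCommMonoid M] {f : ℤ → M} {a b c d e : ℤ}
    (hf : ∀ n ∉ Icc a b, f n = 0) (hc : c + e ≤ a) (hd : b ≤ d + e) :
    ∑ n ∈ Icc c d, f (n + e) = ∑ n ∈ Icc a b, f n := by
  calc ∑ n ∈ Icc c d, f (n + e) = ∑ n ∈ Icc (c + e) (d + e), f n := by
        rw [← map_add_right_Icc, sum_map]; rfl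
    _ = ∑ n ∈ Icc a b, f n := (sum_subset (Icc_subset_Icc hc hd) fun n _ hn ↦ hf n hn).symm

section FiniteGauss

variable {K : Type*} [Field K] {q : K}

def thetaTerm (q : K) (n : ℤ) : K := (-1) ^ n * q ^ (n ^ 2)

lemma thetaTerm_add_one (hq₀ : q ≠ 0) (n : ℤ) :
    thetaTerm q (n + 1) = -q ^ (2 * n + 1) * thetaTerm q n := by
  rw [thetaTerm, thetaTerm, zpow_add_one₀ (by norm_num),
    show (n + 1) ^ 2 = n ^ 2 + (2 * n + 1) by ring, zpow_add₀ hq₀]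
  ring

def gaussSummand (q : K) (N : ℕ) (n : ℤ) : K :=
  thetaTerm q n * gaussBinom (q ^ 2) (2 * N) (n + N)

lemma gaussSummand_eq_zero_of_notMem {N : ℕ} {n : ℤ} (hn : n ∉ Icc (-(N : ℤ)) N) :
    gaussSummand q N n = 0 := by
  rw [gaussSummand, gaussBinom_eq_zero, mul_zero]
  rw [mem_Icc] at hn
  push_cast
  omega

lemma gaussSummand_succ (hq : ∀ j : ℕ, (q ^ 2) ^ (j + 1) ≠ 1) (hq₀ : q ≠ 0) (N : ℕ) (n : ℤ) :
    gaussSummand q (N + 1) n = -q ^ (2 * N + 1) * gaussSummand q N (n + 1)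
      + (1 + q ^ (4 * N + 2)) * gaussSummand q N n
      - q ^ (2 * N + 1) * gaussSummand q N (n - 1) := by
  have hsq (k : ℤ) : (q ^ 2) ^ k = q ^ (2 * k) := by
    rw [zpow_mul, zpow_ofNat]
  have hup : thetaTerm q (n + 1) = -q ^ (2 * n + 1) * thetaTerm q n := thetaTerm_add_one hq₀ n
  have hdown : thetaTerm q n = -q ^ (2 * n - 1) * thetaTerm q (n - 1) := by
    simpa [show 2 * (n - 1) + 1 = 2 * n - 1 by ring] using thetaTerm_add_one hq₀ (n - 1)
  have e1 : q ^ (2 * (n + 1 + N)) = q ^ (2 * n + 1) * q ^ (2 * N + 1) := by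
    rw [← zpow_natCast, ← zpow_add₀ hq₀]; push_cast; ring_nf
  have e2 : q ^ (2 * (N + 1 - n)) * q ^ (2 * n - 1) = q ^ (2 * N + 1) := by
    rw [← zpow_natCast, ← zpow_add₀ hq₀]; push_cast; ring_nf
  simp only [gaussSummand]
  rw [show 2 * (N + 1) = 2 * N + 2 by ring, gaussBinom_add_two hq (pow_ne_zero 2 hq₀)]
  push_cast
  rw [hsq, hsq, show n + (N + 1) = n + 1 + N by ring, show n + 1 + N - 1 = n + N by ring,
    show n + 1 + N - 2 = n - 1 + N by ring, show 2 * N + 2 - (n + 1 + N) = N + 1 - n by ring]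
  linear_combination thetaTerm q n * gaussBinom (q ^ 2) (2 * N) (n + 1 + N) * e1
    + q ^ (2 * N + 1) * gaussBinom (q ^ 2) (2 * N) (n + 1 + N) * hup
    + q ^ (2 * (N + 1 - n)) * gaussBinom (q ^ 2) (2 * N) (n - 1 + N) * hdown
    - thetaTerm q (n - 1) * gaussBinom (q ^ 2) (2 * N) (n - 1 + N) * e2

lemma sum_gaussSummand (hq : ∀ j : ℕ, (q ^ 2) ^ (j + 1) ≠ 1) (hq₀ : q ≠ 0) (N : ℕ) :
    ∑ n ∈ Icc (-(N : ℤ)) N, gaussSummand q N n = ∏ j ∈ range N, (1 - q ^ (2 * j + 1)) ^ 2 := by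
  induction N with
  | zero => simp [gaussSummand, thetaTerm, gaussBinom_zero_right hq]
  | succ N ih =>
    have shift (e : ℤ) (he₀ : -1 ≤ e) (he₁ : e ≤ 1) :
        ∑ n ∈ Icc (-(N + 1 : ℤ)) (N + 1), gaussSummand q N (n + e) =
          ∑ n ∈ Icc (-(N : ℤ)) N, gaussSummand q N n :=
      sum_Icc_comp_add_eq (fun _ ↦ gaussSummand_eq_zero_of_notMem) (by omega) (by omega)
    push_cast
    simp_rw [gaussSummand_succ hq hq₀ N, sum_sub_distrib, sum_add_distrib, ← mul_sum,
      sub_eq_add_neg _ (1 : ℤ), shift 1 (by norm_num) le_rfl, shift (-1) le_rfl (by norm_num)]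
    have shift₀ := shift 0 (by norm_num) (by norm_num)
    simp only [add_zero] at shift₀
    rw [shift₀, ih, prod_range_succ]
    ring

end FiniteGauss

section Analytic

open Filter Topology

variable {x : ℂ}

lemma pow_succ_ne_one_of_norm_lt_one (hx : ‖x‖ < 1) (j : ℕ) : x ^ (j + 1) ≠ 1 := fun h ↦ by
  simpa [← norm_pow, h] using pow_lt_one₀ (norm_nonneg x) hx j.succ_ne_zero

/-- The Euler function `(x; x)_∞`. -/
noncomputable def qPochInf (x : ℂ) : ℂ := ∏' j : ℕ, (1 - x ^ (j + 1))

lemma tendsto_qPoch (hx : ‖x‖ < 1) : Tendsto (qPoch x) atTop (𝓝 (qPochInf x)) :=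
  (ModularForm.multipliable_one_sub_pow hx).hasProd.tendsto_prod_nat

lemma qPochInf_ne_zero (hx : ‖x‖ < 1) : qPochInf x ≠ 0 := by
  have hsum : Summable fun j : ℕ ↦ ‖-x ^ (j + 1)‖ := by
    simpa [norm_pow] using
      (summable_nat_add_iff 1).2 (summable_geometric_of_lt_one (norm_nonneg x) hx)
  have hfactor (j : ℕ) : 1 + -x ^ (j + 1) ≠ 0 := by
    simpa [← sub_eq_add_neg] using sub_ne_zero.2 (pow_succ_ne_one_of_norm_lt_one hx j).symm
  simpa [qPochInf, ← sub_eq_add_neg] using tprod_one_add_ne_zero_of_summable hfactor hsum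

lemma exists_norm_gaussBinom_le (hx : ‖x‖ < 1) : ∃ C, ∀ m k, ‖gaussBinom x m k‖ ≤ C := by
  obtain ⟨A, hA⟩ := (Metric.isBounded_range_of_tendsto _ (tendsto_qPoch hx)).exists_norm_le
  obtain ⟨B, hB⟩ := (Metric.isBounded_range_of_tendsto _
    ((tendsto_qPoch hx).inv₀ (qPochInf_ne_zero hx))).exists_norm_le
  refine ⟨max A 0 * (max B 0 * max B 0), fun m k ↦ ?_⟩
  have hA' (j : ℕ) : ‖qPoch x j‖ ≤ max A 0 := (hA _ ⟨j, rfl⟩).trans (le_max_left _ _)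
  have hB' (j : ℕ) : ‖(qPoch x j)⁻¹‖ ≤ max B 0 := (hB _ ⟨j, rfl⟩).trans (le_max_left _ _)
  unfold gaussBinom
  split_ifs
  · rw [div_eq_mul_inv, mul_inv, norm_mul, norm_mul]
    gcongr
    exacts [hA' _, hB' _, hB' _]
  · rw [norm_zero]; positivity

lemma tendsto_gaussBinom_central (hx : ‖x‖ < 1) (n : ℤ) :
    Tendsto (fun N : ℕ ↦ gaussBinom x (2 * N) (n + N)) atTop (𝓝 (qPochInf x)⁻¹) := by
  have hL := qPochInf_ne_zero hx
  have hshift (c : ℤ) : Tendsto (fun N : ℕ ↦ (c + N).toNat) atTop atTop :=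
    tendsto_atTop_atTop.2 fun b ↦ ⟨b + c.natAbs, fun N hN ↦ by omega⟩
  have hlim := ((tendsto_qPoch hx).comp (tendsto_id.const_mul_atTop' two_pos)).div
    (((tendsto_qPoch hx).comp (hshift n)).mul ((tendsto_qPoch hx).comp (hshift (-n))))
    (mul_ne_zero hL hL)
  rw [div_mul_cancel_left₀ hL] at hlim
  refine hlim.congr' ((eventually_ge_atTop n.natAbs).mono fun N hN ↦ ?_)
  dsimp only [Pi.div_apply, Function.comp_apply, id]
  rw [gaussBinom, if_pos (by omega)]
  congr 3
  omega

variable {q : ℂ}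

lemma norm_thetaTerm_le (hq : ‖q‖ < 1) (n : ℤ) : ‖thetaTerm q n‖ ≤ ‖q‖ ^ n.natAbs := by
  rw [thetaTerm, norm_mul, norm_zpow, norm_zpow, norm_neg, norm_one, one_zpow, one_mul,
    ← Int.natAbs_sq, ← Nat.cast_pow, zpow_natCast]
  exact pow_le_pow_of_le_one (norm_nonneg q) hq.le (Nat.le_self_pow two_ne_zero _)

lemma summable_pow_natAbs (hq : ‖q‖ < 1) : Summable fun n : ℤ ↦ ‖q‖ ^ n.natAbs := by
  apply Summable.of_nat_of_neg <;>
    simpa using summable_geometric_of_lt_one (norm_nonneg q) hq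

lemma tendsto_sum_gaussSummand (hq : ‖q‖ < 1) :
    Tendsto (fun N : ℕ ↦ ∑ n ∈ Icc (-(N : ℤ)) N, gaussSummand q N n) atTop
      (𝓝 ((∑' n : ℤ, thetaTerm q n) * (qPochInf (q ^ 2))⁻¹)) := by
  have hQ : ‖q ^ 2‖ < 1 := by simpa using pow_lt_one₀ (norm_nonneg q) hq two_ne_zero
  obtain ⟨C, hC⟩ := exists_norm_gaussBinom_le hQ
  rw [← tsum_mul_right]
  refine (tendsto_tsum_of_dominated_convergence ((summable_pow_natAbs hq).mul_left C)
    (fun n ↦ (tendsto_gaussBinom_central hQ n).const_mul (thetaTerm q n))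
    (.of_forall fun N n ↦ ?_)).congr fun N ↦ ?_
  · rw [norm_mul, mul_comm C]
    exact mul_le_mul (norm_thetaTerm_le hq n) (hC _ _) (norm_nonneg _) (by positivity)
  · exact tsum_eq_sum fun n hn ↦ gaussSummand_eq_zero_of_notMem hn

lemma multipliable_one_sub_odd_pow (hq : ‖q‖ < 1) :
    Multipliable fun j : ℕ ↦ 1 - q ^ (2 * j + 1) := by
  have hsum : Summable fun j : ℕ ↦ ‖-q ^ (2 * j + 1)‖ := by
    simpa [norm_pow, pow_succ, pow_mul] using (summable_geometric_of_lt_one (by positivity)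
      (pow_lt_one₀ (norm_nonneg q) hq two_ne_zero)).mul_right ‖q‖
  simpa [← sub_eq_add_neg] using multipliable_one_add_of_summable hsum

lemma qPochInf_eq_tprod_odd_mul (hq : ‖q‖ < 1) :
    qPochInf q = (∏' j : ℕ, (1 - q ^ (2 * j + 1))) * qPochInf (q ^ 2) := by
  have hQ : ‖q ^ 2‖ < 1 := by simpa using pow_lt_one₀ (norm_nonneg q) hq two_ne_zero
  have hodd (j : ℕ) : (q ^ 2) ^ (j + 1) = q ^ (2 * j + 1 + 1) := by ring
  have hsplit := tprod_even_mul_odd (f := fun k : ℕ ↦ 1 - q ^ (k + 1))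
    (multipliable_one_sub_odd_pow hq)
    (by simpa only [hodd] using ModularForm.multipliable_one_sub_pow hQ)
  simp_rw [qPochInf, hodd]
  exact hsplit.symm

theorem tsum_thetaTerm (hq : ‖q‖ < 1) (hq₀ : q ≠ 0) :
    ∑' n : ℤ, thetaTerm q n = qPochInf q ^ 2 / qPochInf (q ^ 2) := by
  have hQ : ‖q ^ 2‖ < 1 := by simpa using pow_lt_one₀ (norm_nonneg q) hq two_ne_zero
  have hprod : Tendsto (fun N : ℕ ↦ ∑ n ∈ Icc (-(N : ℤ)) N, gaussSummand q N n) atTop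
      (𝓝 ((∏' j : ℕ, (1 - q ^ (2 * j + 1))) ^ 2)) := by
    simp_rw [sum_gaussSummand (pow_succ_ne_one_of_norm_lt_one hQ) hq₀, prod_pow]
    exact (multipliable_one_sub_odd_pow hq).hasProd.tendsto_prod_nat.pow 2
  have h := tendsto_nhds_unique (tendsto_sum_gaussSummand hq) hprod
  rw [qPochInf_eq_tprod_odd_mul hq, eq_div_iff (qPochInf_ne_zero hQ), mul_pow, ← h]
  field_simp

end Analytic

lemma eta_eq_mul_qPochInf (τ : ℂ) :
    eta τ = Complex.exp (Real.pi * Complex.I * τ / 12) *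
      qPochInf (Complex.exp (2 * Real.pi * Complex.I * τ)) := by
  rw [eta, qPochInf]
  congr 2 with n
  rw [← Complex.exp_nat_mul]
  push_cast
  ring_nf

theorem thetaNull01_eq_eta_quotient (τ : ℂ) (hτ : 0 < τ.im) :
    (∑' n : ℤ, (-1 : ℂ) ^ n * Complex.exp (Real.pi * Complex.I * τ * n ^ 2))
      = eta (τ / 2) ^ 2 / eta τ := by
  set q := Complex.exp (Real.pi * Complex.I * τ)
  have hq : ‖q‖ < 1 := by
    rw [Complex.norm_exp, Real.exp_lt_one_iff]
    simpa using mul_pos Real.pi_pos hτ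
  have hterm (n : ℤ) : (-1 : ℂ) ^ n * Complex.exp (Real.pi * Complex.I * τ * n ^ 2) =
      thetaTerm q n := by
    rw [thetaTerm, ← Complex.exp_int_mul]
    push_cast
    ring_nf
  have hq2 : Complex.exp (2 * Real.pi * Complex.I * τ) = q ^ 2 := by
    rw [← Complex.exp_nat_mul]; push_cast; ring_nf
  have hq1 : Complex.exp (2 * Real.pi * Complex.I * (τ / 2)) = q := by congr 1; ring
  have hc : Complex.exp (Real.pi * Complex.I * (τ / 2) / 12) ^ 2 =
      Complex.exp (Real.pi * Complex.I * τ / 12) := by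
    rw [← Complex.exp_nat_mul]; push_cast; ring_nf
  rw [tsum_congr hterm, tsum_thetaTerm hq (Complex.exp_ne_zero _), eta_eq_mul_qPochInf,
    eta_eq_mul_qPochInf, hq1, hq2, mul_pow, hc, mul_div_mul_left _ _ (Complex.exp_ne_zero _)]
end
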